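/- The map c ↦ CanonTop(c) is a bijection from the set of minimal recurrent configurations of the ASM on a permutation graph G_π with sink s to the set of (π,s)-compatible ordered partitions of [n]. -/

import Mathlib

open Finset
open scoped Classical

def permGraph {n : ℕ} (π : Equiv.Perm (Fin n)) : SimpleGraph (Fin n) :=
  SimpleGraph.fromRel (fun i j => i < j ∧ π.symm j < π.symm i)

noncomputable def topple {n : ℕ} (G : SimpleGraph (Fin n)) (c : Fin n → ℕ) (i : Fin n) :
    Fin n → ℕ :=
  fun j => if j = i then c j - G.degree i else c j + (if G.Adj i j then 1 else 0)

noncomputable def toppleList {n : ℕ} (G : SimpleGraph (Fin n)) (c : Fin n → ℕ) :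
    List (Fin n) → (Fin n → ℕ)
  | [] => c
  | i :: l => toppleList G (topple G c i) l

def ValidTopplings {n : ℕ} (G : SimpleGraph (Fin n)) (c : Fin n → ℕ) :
    List (Fin n) → Prop
  | [] => True
  | i :: l => G.degree i ≤ c i ∧ ValidTopplings G (topple G c i) l

def IsRecurrent {n : ℕ} (G : SimpleGraph (Fin n)) (s : Fin n) (c : Fin n → ℕ) : Prop :=
  c s = G.degree s ∧ (∀ i, i ≠ s → c i < G.degree i) ∧
    ∃ l : List (Fin n), l.head? = some s ∧ l.Nodup ∧ (∀ v, v ∈ l) ∧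
      ValidTopplings G c l ∧ toppleList G c l = c

noncomputable def level {n : ℕ} (G : SimpleGraph (Fin n)) (c : Fin n → ℕ) : ℤ :=
  (∑ i, (c i : ℤ)) - (G.edgeFinset.card : ℤ)

noncomputable def confAfterSet {n : ℕ} (G : SimpleGraph (Fin n)) (c : Fin n → ℕ)
    (D : Finset (Fin n)) (i : Fin n) : ℤ :=
  (c i : ℤ) + ((D.filter (G.Adj i)).card : ℤ) - (if i ∈ D then (G.degree i : ℤ) else 0)

noncomputable def canonTopCum {n : ℕ} (G : SimpleGraph (Fin n)) (s : Fin n)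
    (c : Fin n → ℕ) : ℕ → Finset (Fin n)
  | 0 => {s}
  | k + 1 => canonTopCum G s c k ∪
      Finset.univ.filter (fun i => i ∉ canonTopCum G s c k ∧
        (G.degree i : ℤ) ≤ confAfterSet G c (canonTopCum G s c k) i)

/-- The canonical toppling of `c`: `P 0 = {s}` and `P (k+1)` is the set of (non-sink)
vertices becoming unstable after toppling all of `P 0, …, P k`. -/
noncomputable def canonTopPart {n : ℕ} (G : SimpleGraph (Fin n)) (s : Fin n)
    (c : Fin n → ℕ) : ℕ → Finset (Fin n)
  | 0 => {s}
  | k + 1 => canonTopCum G s c (k + 1) \ canonTopCum G s c k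

/-- `P 0, …, P k` is a `(π, s)`-compatible ordered partition of `[n]`:
`P 0 = {s}`; the parts are nonempty, pairwise disjoint, cover everything (and `P j`
is empty for `j > k`); no two elements of a part form an inversion of `π`; and every
element of `P j` (`j ≥ 1`) forms an inversion with some element of `P (j-1)`. -/
def IsCompatiblePartition {n : ℕ} (π : Equiv.Perm (Fin n)) (s : Fin n)
    (P : ℕ → Finset (Fin n)) (k : ℕ) : Prop :=
  P 0 = {s} ∧
  (∀ j, j ≤ k → (P j).Nonempty) ∧
  (∀ j, k < j → P j = ∅) ∧
  (∀ i j, i < j → Disjoint (P i) (P j)) ∧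
  (Finset.range (k + 1)).biUnion P = Finset.univ ∧
  (∀ j, j ≤ k → ∀ a ∈ P j, ∀ b ∈ P j, ¬ (permGraph π).Adj a b) ∧
  (∀ j, 1 ≤ j → j ≤ k → ∀ a ∈ P j, ∃ b ∈ P (j - 1), (permGraph π).Adj a b)

/-!
Rank every vertex by the step of the canonical toppling at which it topples. When `c` is
recurrent every vertex gets a rank, and a vertex is unstable as soon as its neighbours of
smaller rank have toppled: `deg v ≤ c v + e_<(v)`, where `e_<(v)` (`lowerDegree`) counts
those neighbours. Summing over all vertices gives
`∑ c ≥ ∑ deg - ∑ e_< = |E| + (number of edges inside a rank class)`, so level `0` forces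
equality everywhere: rank classes are independent and `c v = deg v - e_<(v)`. Hence `c` is
recovered from its canonical toppling, and the rank classes form a compatible partition, since
a vertex of rank `j + 1` with no neighbour of rank `j` would have been unstable one step
earlier. Conversely, for the ranks `r` of a compatible partition, `deg v - e_<(v)` is
recurrent (topple the vertices by increasing rank), has level `0` by the same count, and its
canonical toppling is the partition again.
-/

open Function

section

variable {n : ℕ} {G : SimpleGraph (Fin n)}

section Toppling

lemma toppleList_append (c : Fin n → ℕ) (l₁ l₂ : List (Fin n)) :
    toppleList G c (l₁ ++ l₂) = toppleList G (toppleList G c l₁) l₂ := by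
  induction l₁ generalizing c with
  | nil => rfl
  | cons i l ih => exact ih _

lemma topple_apply_add_card (c : Fin n → ℕ) {i v : Fin n} (hvi : v ≠ i) {D : Finset (Fin n)}
    (hi : i ∉ D) :
    topple G c i v + #{u ∈ D | G.Adj v u} = c v + #{u ∈ insert i D | G.Adj v u} := by
  rw [topple, if_neg hvi, filter_insert, G.adj_comm]
  split_ifs
  · rw [card_insert_of_notMem (fun h => hi (mem_filter.1 h).1)]; omega
  · rfl

lemma toppleList_apply_of_notMem (c : Fin n → ℕ) {l : List (Fin n)} (hl : l.Nodup) {v : Fin n}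
    (hv : v ∉ l) : toppleList G c l v = c v + #{u ∈ l.toFinset | G.Adj v u} := by
  induction l generalizing c with
  | nil => simp [toppleList]
  | cons i l ih =>
    obtain ⟨hvi, hvl⟩ : v ≠ i ∧ v ∉ l := by simpa using hv
    rw [toppleList, ih _ hl.of_cons hvl, List.toFinset_cons,
      topple_apply_add_card c hvi (by simpa using (List.nodup_cons.1 hl).1)]

lemma validTopplings_iff (c : Fin n → ℕ) {l : List (Fin n)} (hl : l.Nodup) :
    ValidTopplings G c l ↔ ∀ l₁ v l₂, l = l₁ ++ v :: l₂ →
      G.degree v ≤ c v + #{u ∈ l₁.toFinset | G.Adj v u} := by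
  induction l generalizing c with
  | nil => simp [ValidTopplings]
  | cons i l ih =>
    have key : ∀ l₁ v l₂, l = l₁ ++ v :: l₂ →
        topple G c i v + #{u ∈ l₁.toFinset | G.Adj v u}
          = c v + #{u ∈ (i :: l₁).toFinset | G.Adj v u} := by
      rintro l₁ v l₂ rfl
      have hi : i ∉ l₁ ++ v :: l₂ := (List.nodup_cons.1 hl).1
      rw [List.toFinset_cons]
      exact topple_apply_add_card c (by rintro rfl; simp at hi) (by simp_all)
    rw [ValidTopplings, ih _ hl.of_cons]
    constructor
    · rintro ⟨hi, hl'⟩ (_ | ⟨j, l₁⟩) v l₂ h <;> simp only [List.nil_append, List.cons_append,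
        List.cons.injEq] at h <;> obtain ⟨rfl, rfl⟩ := h
      · simpa using hi
      · rw [← key l₁ v l₂ rfl]; exact hl' l₁ v l₂ rfl
    · intro h
      refine ⟨by simpa using h [] i l rfl, fun l₁ v l₂ hl' => ?_⟩
      rw [key l₁ v l₂ hl']
      exact h (i :: l₁) v l₂ (by rw [hl']; rfl)

lemma toppleList_eq_self {c : Fin n → ℕ} {l : List (Fin n)} (hl : l.Nodup) (hall : ∀ v, v ∈ l)
    (hval : ValidTopplings G c l) : toppleList G c l = c := by
  funext v
  obtain ⟨l₁, l₂, rfl⟩ := List.append_of_mem (hall v)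
  have hnd : (v :: (l₁ ++ l₂)).Nodup := List.nodup_middle.1 hl
  obtain ⟨hv₁, hv₂⟩ : v ∉ l₁ ∧ v ∉ l₂ := by simpa using (List.nodup_cons.1 hnd).1
  have hdeg : #{u ∈ l₁.toFinset | G.Adj v u} + #{u ∈ l₂.toFinset | G.Adj v u} = G.degree v := by
    rw [← card_union_of_disjoint (disjoint_filter_filter (List.disjoint_toFinset_iff_disjoint.2
      (List.disjoint_of_nodup_append hnd.of_cons))), ← filter_union,
      ← G.card_neighborFinset_eq_degree, G.neighborFinset_eq_filter]
    congr 1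
    ext u
    simp only [mem_filter, mem_union, List.mem_toFinset, mem_univ, true_and]
    have := hall u
    simp only [List.mem_append, List.mem_cons] at this
    rcases this with h | rfl | h
    · simp [h]
    · simp
    · simp [h]
  have hle := (validTopplings_iff c hl).1 hval l₁ v l₂ rfl
  rw [toppleList_append, toppleList, toppleList_apply_of_notMem _ (hl.sublist (by simp)) hv₂,
    topple, if_pos rfl, toppleList_apply_of_notMem _ (hl.sublist (by simp)) hv₁]
  omega

lemma mem_of_validTopplings {c : Fin n → ℕ} {l : List (Fin n)} (hl : l.Nodup)
    (hval : ValidTopplings G c l) {F : Finset (Fin n)}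
    (hF : ∀ v ∉ F, c v + #{u ∈ F | G.Adj v u} < G.degree v) {v : Fin n} (hv : v ∈ l) : v ∈ F := by
  obtain ⟨l₁, l₂, hdec⟩ := List.append_of_mem hv
  -- Induction on the position of `v`: all earlier vertices lie in `F`, so if `v` could topple,
  -- `F` alone would already make it unstable.
  induction h : l₁.length using Nat.strong_induction_on generalizing l₁ v l₂ with
  | _ k ih =>
    have hl₁ : l₁.toFinset ⊆ F := fun u hu => by
      obtain ⟨a, b, rfl⟩ := List.append_of_mem (List.mem_toFinset.1 hu)
      exact ih a.length (by simp [← h]) (by simp [hdec]) a (b ++ v :: l₂) (by simp [hdec]) rfl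
    have hle := (validTopplings_iff c hl).1 hval l₁ v l₂ hdec
    have hsub : #{u ∈ l₁.toFinset | G.Adj v u} ≤ #{u ∈ F | G.Adj v u} :=
      card_le_card (filter_subset_filter _ hl₁)
    by_contra hvF
    exact absurd (hF v hvF) (by omega)

end Toppling

section CanonicalToppling

variable (G) (s : Fin n) (c : Fin n → ℕ)

lemma mem_canonTopCum_succ {v : Fin n} {k : ℕ} :
    v ∈ canonTopCum G s c (k + 1) ↔ v ∈ canonTopCum G s c k ∨
      (v ∉ canonTopCum G s c k ∧ G.degree v ≤ c v + #{u ∈ canonTopCum G s c k | G.Adj v u}) := by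
  have hfilter : (canonTopCum G s c k).filter (G.Adj v) = {u ∈ canonTopCum G s c k | G.Adj v u} :=
    rfl
  rw [canonTopCum, mem_union, mem_filter, confAfterSet, hfilter]
  by_cases h : v ∈ canonTopCum G s c k
  · simp [h]
  · simp only [h, if_false, mem_univ, true_and, false_or, not_false_eq_true]
    omega

lemma canonTopCum_mono : Monotone (canonTopCum G s c) :=
  monotone_nat_of_le_succ fun _ => subset_union_left

lemma canonTopCum_eq_biUnion (k : ℕ) :
    canonTopCum G s c k = (range (k + 1)).biUnion (canonTopPart G s c) := by
  induction k with
  | zero => rfl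
  | succ k ih =>
    rw [range_add_one, biUnion_insert, ← ih, canonTopPart, union_comm,
      union_sdiff_of_subset (canonTopCum_mono G s c k.le_succ)]

lemma canonTopPart_pairwise_disjoint : Pairwise (Disjoint on (canonTopPart G s c)) := by
  refine (pairwise_disjoint_on _).2 fun i j hij => ?_
  obtain ⟨j, rfl⟩ : ∃ j', j = j' + 1 := ⟨j - 1, by omega⟩
  have hi : canonTopPart G s c i ⊆ canonTopCum G s c j := by
    rw [canonTopCum_eq_biUnion]
    exact subset_biUnion_of_mem _ (by simp; omega)
  exact disjoint_of_subset_left hi disjoint_sdiff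

lemma exists_canonTopCum_eq_univ (hrec : IsRecurrent G s c) :
    ∃ k, canonTopCum G s c k = univ := by
  obtain ⟨k, hk⟩ := WellFoundedGT.monotone_chain_condition ⟨_, canonTopCum_mono G s c⟩
  obtain ⟨l, -, hl, hall, hval, -⟩ := hrec.2.2
  refine ⟨k, eq_univ_of_forall fun v => mem_of_validTopplings hl hval (fun u hu => ?_) (hall v)⟩
  have hfix : canonTopCum G s c (k + 1) = canonTopCum G s c k := (hk _ k.le_succ).symm
  by_contra hle
  exact hu (hfix ▸ (mem_canonTopCum_succ G s c).2 (Or.inr ⟨hu, by omega⟩))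

end CanonicalToppling

section Rank

noncomputable def partRank {α : Type*} (P : ℕ → Finset α) (v : α) : ℕ :=
  if h : ∃ j, v ∈ P j then Nat.find h else 0

lemma mem_iff_partRank_eq {α : Type*} {P : ℕ → Finset α} (hP : Pairwise (Disjoint on P)) {v : α}
    (hv : ∃ j, v ∈ P j) {j : ℕ} : v ∈ P j ↔ partRank P v = j := by
  have hmem : v ∈ P (partRank P v) := by rw [partRank, dif_pos hv]; exact Nat.find_spec hv
  refine ⟨fun h => ?_, fun h => h ▸ hmem⟩
  by_contra hne
  exact disjoint_left.1 (hP hne) hmem h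

noncomputable def lowerDegree (G : SimpleGraph (Fin n)) (r : Fin n → ℕ) (v : Fin n) : ℕ :=
  #{u | G.Adj v u ∧ r u < r v}

noncomputable def sameRankDegree (G : SimpleGraph (Fin n)) (r : Fin n → ℕ) (v : Fin n) : ℕ :=
  #{u | G.Adj v u ∧ r u = r v}

variable {r : Fin n → ℕ}

lemma lowerDegree_le_degree (v : Fin n) : lowerDegree G r v ≤ G.degree v := by
  rw [lowerDegree, ← G.card_neighborFinset_eq_degree, G.neighborFinset_eq_filter]
  exact card_le_card fun u hu => by simp_all

lemma two_mul_sum_lowerDegree_add_sum_sameRankDegree :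
    2 * ∑ v, lowerDegree G r v + ∑ v, sameRankDegree G r v = 2 * #G.edgeFinset := by
  have hsplit (v : Fin n) : lowerDegree G r v + sameRankDegree G r v
      + #{u | G.Adj v u ∧ r v < r u} = G.degree v := by
    rw [lowerDegree, sameRankDegree, ← G.card_neighborFinset_eq_degree,
      G.neighborFinset_eq_filter]
    simp only [card_filter, ← sum_add_distrib]
    refine sum_congr rfl fun u _ => ?_
    by_cases h : G.Adj v u <;> simp only [h, true_and, false_and, if_false]
    split_ifs <;> omega
  have hsymm : ∑ v, #{u | G.Adj v u ∧ r v < r u} = ∑ v, lowerDegree G r v := by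
    simp only [lowerDegree, card_filter]
    rw [sum_comm]
    simp only [G.adj_comm]
  rw [← G.sum_degrees_eq_twice_card_edges, ← sum_congr rfl fun v _ => hsplit v]
  simp only [sum_add_distrib, hsymm]
  ring

lemma sameRankDegree_eq_zero_iff {v : Fin n} :
    sameRankDegree G r v = 0 ↔ ∀ u, G.Adj v u → r u ≠ r v := by
  simp [sameRankDegree, card_eq_zero, filter_eq_empty_iff]

variable {c : Fin n → ℕ}

lemma level_eq_zero_iff : level G c = 0 ↔ ∑ v, c v = #G.edgeFinset := by
  rw [level, sub_eq_zero]
  exact_mod_cast Iff.rfl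

lemma sum_eq_card_edgeFinset_iff (hle : ∀ v, G.degree v ≤ c v + lowerDegree G r v) :
    ∑ v, c v = #G.edgeFinset ↔
      (∀ v, sameRankDegree G r v = 0) ∧ ∀ v, c v + lowerDegree G r v = G.degree v := by
  have hcount := two_mul_sum_lowerDegree_add_sum_sameRankDegree (G := G) (r := r)
  have hdeg := G.sum_degrees_eq_twice_card_edges
  have hsum := sum_le_sum fun v (_ : v ∈ univ) => hle v
  rw [sum_add_distrib] at hsum
  constructor
  · intro hc
    have hsame : ∑ v, sameRankDegree G r v = 0 := by omega
    refine ⟨fun v => sum_eq_zero_iff.1 hsame v (mem_univ v), fun v => ?_⟩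
    refine ((sum_eq_sum_iff_of_le fun v _ => hle v).1 ?_ v (mem_univ v)).symm
    rw [sum_add_distrib]
    omega
  · rintro ⟨hsame, htight⟩
    rw [sum_eq_zero fun v _ => hsame v] at hcount
    rw [← sum_congr rfl fun v _ => htight v, sum_add_distrib] at hdeg
    omega

lemma isRecurrent_of_rank {s : Fin n} (hr : ∀ v, r v = 0 ↔ v = s) (hs : c s = G.degree s)
    (hstable : ∀ v, v ≠ s → c v < G.degree v) (hle : ∀ v, G.degree v ≤ c v + lowerDegree G r v) :
    IsRecurrent G s c := by
  set l := univ.toList.mergeSort (fun a b => decide (r a ≤ r b))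
  have hsorted : l.Pairwise (fun a b => r a ≤ r b) := by
    simpa using List.pairwise_mergeSort (le := fun a b => decide (r a ≤ r b))
      (by simpa using fun _ _ _ => le_trans) (by simpa using fun a b => le_total (r a) (r b)) _
  have hl : l.Nodup := (List.mergeSort_perm _ _).nodup_iff.2 (nodup_toList _)
  have hall : ∀ v, v ∈ l := by simp [l]
  have hval : ValidTopplings G c l := by
    refine (validTopplings_iff c hl).2 fun l₁ v l₂ hdec => (hle v).trans ?_
    refine Nat.add_le_add_left (card_le_card fun u hu => ?_) _
    obtain ⟨hadj, hlt⟩ := (mem_filter.1 hu).2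
    have hu' := hall u
    rw [hdec] at hsorted hu'
    simp only [List.pairwise_append, List.pairwise_cons] at hsorted
    simp only [List.mem_append, List.mem_cons] at hu'
    rcases hu' with h | rfl | h
    · simpa [h] using hadj
    · omega
    · exact absurd (hsorted.2.1.1 u h) (by omega)
  refine ⟨hs, hstable, l, ?_, hl, hall, hval, toppleList_eq_self hl hall hval⟩
  obtain _ | ⟨h, t⟩ := l
  · simpa using hall s
  · have hhs : r h ≤ r s := by
      rcases List.mem_cons.1 (hall s) with rfl | hst
      · exact le_rfl
      · exact List.rel_of_pairwise_cons hsorted hst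
    rw [List.head?_cons, (hr h).1 (by have := (hr s).2 rfl; omega)]

end Rank

def IsCanonRank (G : SimpleGraph (Fin n)) (s : Fin n) (c : Fin n → ℕ) (r : Fin n → ℕ) : Prop :=
  ∀ v k, v ∈ canonTopCum G s c k ↔ r v ≤ k

namespace IsCanonRank

variable {s : Fin n} {c r : Fin n → ℕ}

lemma eq_zero_iff (hr : IsCanonRank G s c r) {v : Fin n} : r v = 0 ↔ v = s := by
  rw [← Nat.le_zero, ← hr v 0, canonTopCum, mem_singleton]

lemma mem_canonTopPart_iff (hr : IsCanonRank G s c r) {v : Fin n} {j : ℕ} :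
    v ∈ canonTopPart G s c j ↔ r v = j := by
  cases j with
  | zero => rw [canonTopPart, mem_singleton, hr.eq_zero_iff]
  | succ j => rw [canonTopPart, mem_sdiff, hr, hr]; omega

lemma card_filter_adj_canonTopCum (hr : IsCanonRank G s c r) (v : Fin n) (k : ℕ) :
    #{u ∈ canonTopCum G s c k | G.Adj v u} = #{u | G.Adj v u ∧ r u ≤ k} := by
  congr 1
  ext u
  simp [hr u k, and_comm]

lemma degree_le_add_lowerDegree (hr : IsCanonRank G s c r) (hs : c s = G.degree s) (v : Fin n) :
    G.degree v ≤ c v + lowerDegree G r v := by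
  cases hv : r v with
  | zero =>
    obtain rfl := hr.eq_zero_iff.1 hv
    simp [lowerDegree, hv, hs]
  | succ j =>
    have hnot : v ∉ canonTopCum G s c j := by rw [hr]; omega
    have hfilter : #{u | G.Adj v u ∧ r u ≤ j} = #{u | G.Adj v u ∧ r u < r v} := by
      congr 1; ext u; simp [hv]
    have := (mem_canonTopCum_succ G s c).1 ((hr v (j + 1)).2 hv.le)
    rw [or_iff_right hnot, hr.card_filter_adj_canonTopCum] at this
    rw [lowerDegree, ← hfilter]
    exact this.2

lemma add_card_lt_degree (hr : IsCanonRank G s c r) (hstable : ∀ v, v ≠ s → c v < G.degree v)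
    {v : Fin n} (hv : v ≠ s) : c v + #{u | G.Adj v u ∧ r u + 1 < r v} < G.degree v := by
  obtain ⟨j, hj⟩ : ∃ j, r v = j + 1 :=
    Nat.exists_eq_add_one.2 (Nat.pos_of_ne_zero (hr.eq_zero_iff.not.2 hv))
  cases j with
  | zero => simpa [hj] using hstable v hv
  | succ j =>
    have hnot : v ∉ canonTopCum G s c (j + 1) := by rw [hr]; omega
    have hnot' : v ∉ canonTopCum G s c j := by rw [hr]; omega
    have hfilter : #{u | G.Adj v u ∧ r u ≤ j} = #{u | G.Adj v u ∧ r u + 1 < r v} := by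
      congr 1; ext u
      simp only [mem_filter, mem_univ, true_and, hj]
      exact and_congr_right fun _ => by omega
    have hlt : ¬ G.degree v ≤ c v + #{u ∈ canonTopCum G s c j | G.Adj v u} :=
      fun h => hnot ((mem_canonTopCum_succ G s c).2 (Or.inr ⟨hnot', h⟩))
    rw [hr.card_filter_adj_canonTopCum, hfilter] at hlt
    omega

lemma exists_adj_succ_eq (hr : IsCanonRank G s c r) (hs : c s = G.degree s)
    (hstable : ∀ v, v ≠ s → c v < G.degree v) {v : Fin n} (hv : v ≠ s) :
    ∃ u, G.Adj v u ∧ r u + 1 = r v := by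
  by_contra! h
  have hfilter : #{u | G.Adj v u ∧ r u < r v} = #{u | G.Adj v u ∧ r u + 1 < r v} := by
    congr 1
    ext u
    simp only [mem_filter, mem_univ, true_and]
    exact and_congr_right fun hadj => by have := h u hadj; omega
  have hle := hr.degree_le_add_lowerDegree hs v
  have hlt := hr.add_card_lt_degree hstable hv
  rw [lowerDegree, hfilter] at hle
  omega

end IsCanonRank

lemma isCanonRank_partRank_canonTopPart {s : Fin n} {c : Fin n → ℕ} (hrec : IsRecurrent G s c) :
    IsCanonRank G s c (partRank (canonTopPart G s c)) := by
  obtain ⟨K, hK⟩ := exists_canonTopCum_eq_univ G s c hrec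
  have hex (v : Fin n) : ∃ j, v ∈ canonTopPart G s c j := by
    have hv : v ∈ canonTopCum G s c K := hK ▸ mem_univ v
    rw [canonTopCum_eq_biUnion, mem_biUnion] at hv
    exact hv.imp fun _ h => h.2
  intro v k
  simp [canonTopCum_eq_biUnion, mem_iff_partRank_eq (canonTopPart_pairwise_disjoint G s c) (hex v)]

structure IsCompatibleRank (G : SimpleGraph (Fin n)) (s : Fin n) (r : Fin n → ℕ) : Prop where
  eq_zero_iff : ∀ v, r v = 0 ↔ v = s
  ne_of_adj : ∀ u v, G.Adj u v → r u ≠ r v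
  exists_adj_succ_eq : ∀ v, v ≠ s → ∃ u, G.Adj v u ∧ r u + 1 = r v

noncomputable def rankConf (G : SimpleGraph (Fin n)) (r : Fin n → ℕ) (v : Fin n) : ℕ :=
  G.degree v - lowerDegree G r v

lemma rankConf_add_lowerDegree {r : Fin n → ℕ} (v : Fin n) :
    rankConf G r v + lowerDegree G r v = G.degree v :=
  Nat.sub_add_cancel (lowerDegree_le_degree v)

namespace IsCompatibleRank

variable {s : Fin n} {r : Fin n → ℕ}

lemma sameRankDegree_eq_zero (hr : IsCompatibleRank G s r) (v : Fin n) :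
    sameRankDegree G r v = 0 :=
  sameRankDegree_eq_zero_iff.2 fun u h => (hr.ne_of_adj v u h).symm

lemma isCanonRank (hr : IsCompatibleRank G s r) : IsCanonRank G s (rankConf G r) r := by
  intro v k
  induction k generalizing v with
  | zero => rw [canonTopCum, mem_singleton, Nat.le_zero, hr.eq_zero_iff]
  | succ k ih =>
    have hcard : #{u ∈ canonTopCum G s (rankConf G r) k | G.Adj v u}
        = #{u | G.Adj v u ∧ r u ≤ k} := by
      congr 1; ext u; simp [ih u, and_comm]
    rw [mem_canonTopCum_succ, ih, hcard]
    have htight := rankConf_add_lowerDegree (G := G) (r := r) v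
    by_cases hvk : r v ≤ k
    · simp only [hvk, true_or, true_iff]; omega
    simp only [hvk, false_or, not_false_eq_true, true_and]
    rcases Nat.lt_or_ge (k + 1) (r v) with hv | hv
    · obtain ⟨w, hw, hrw⟩ := hr.exists_adj_succ_eq v fun h => by
        rw [(hr.eq_zero_iff v).2 h] at hv; omega
      have hlow : #{u | G.Adj v u ∧ r u ≤ k} < lowerDegree G r v := by
        refine card_lt_card ((ssubset_iff_of_subset fun u hu => ?_).2 ⟨w, ?_, ?_⟩)
        · simp only [mem_filter, mem_univ, true_and] at hu ⊢; exact ⟨hu.1, by omega⟩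
        · simp only [mem_filter, mem_univ, true_and]; exact ⟨hw, by omega⟩
        · simp only [mem_filter, mem_univ, true_and, not_and, not_le]; omega
      omega
    · have hlow : #{u | G.Adj v u ∧ r u ≤ k} = lowerDegree G r v := by
        rw [lowerDegree]; congr 1; ext u
        simp only [mem_filter, mem_univ, true_and]
        exact and_congr_right fun _ => by omega
      omega

lemma exists_eq_of_le (hr : IsCompatibleRank G s r) {v : Fin n} {j : ℕ} (hj : j ≤ r v) :
    ∃ u, r u = j := by
  obtain ⟨m, hm⟩ : ∃ m, r v = m := ⟨_, rfl⟩
  induction m generalizing v with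
  | zero => exact ⟨v, by omega⟩
  | succ m ih =>
    rcases Nat.lt_or_ge j (m + 1) with hlt | hge
    · obtain ⟨u, -, hu⟩ := hr.exists_adj_succ_eq v fun hv => by
        simp [(hr.eq_zero_iff v).2 hv] at hm
      exact ih (v := u) (by omega) (by omega)
    · exact ⟨v, by omega⟩

lemma isRecurrent_rankConf (hr : IsCompatibleRank G s r) : IsRecurrent G s (rankConf G r) := by
  refine isRecurrent_of_rank hr.eq_zero_iff ?_ (fun v hv => ?_)
    (fun v => (rankConf_add_lowerDegree v).ge)
  · have : lowerDegree G r s = 0 := by simp [lowerDegree, (hr.eq_zero_iff s).2 rfl]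
    simp [rankConf, this]
  · obtain ⟨u, hadj, hu⟩ := hr.exists_adj_succ_eq v hv
    have hpos : 0 < lowerDegree G r v := card_pos.2 ⟨u, by simp [hadj]; omega⟩
    have := rankConf_add_lowerDegree (G := G) (r := r) v
    omega

lemma level_rankConf (hr : IsCompatibleRank G s r) : level G (rankConf G r) = 0 :=
  level_eq_zero_iff.2 <| (sum_eq_card_edgeFinset_iff fun v => (rankConf_add_lowerDegree v).ge).2
    ⟨hr.sameRankDegree_eq_zero, rankConf_add_lowerDegree⟩

end IsCompatibleRank

structure IsCompatibleLayering (G : SimpleGraph (Fin n)) (s : Fin n) (P : ℕ → Finset (Fin n))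
    (k : ℕ) : Prop where
  zero_eq : P 0 = {s}
  nonempty : ∀ j, j ≤ k → (P j).Nonempty
  eq_empty : ∀ j, k < j → P j = ∅
  disjoint : ∀ i j, i < j → Disjoint (P i) (P j)
  biUnion_eq : (range (k + 1)).biUnion P = univ
  not_adj : ∀ j, j ≤ k → ∀ a ∈ P j, ∀ b ∈ P j, ¬ G.Adj a b
  exists_adj : ∀ j, 1 ≤ j → j ≤ k → ∀ a ∈ P j, ∃ b ∈ P (j - 1), G.Adj a b

lemma isCompatiblePartition_iff {π : Equiv.Perm (Fin n)} {s : Fin n} {P : ℕ → Finset (Fin n)}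
    {k : ℕ} : IsCompatiblePartition π s P k ↔ IsCompatibleLayering (permGraph π) s P k :=
  ⟨fun ⟨h₀, h₁, h₂, h₃, h₄, h₅, h₆⟩ => ⟨h₀, h₁, h₂, h₃, h₄, h₅, h₆⟩,
    fun ⟨h₀, h₁, h₂, h₃, h₄, h₅, h₆⟩ => ⟨h₀, h₁, h₂, h₃, h₄, h₅, h₆⟩⟩

namespace IsCanonRank

variable {s : Fin n} {c r : Fin n → ℕ}

lemma isCompatibleRank (hr : IsCanonRank G s c r) (hs : c s = G.degree s)
    (hstable : ∀ v, v ≠ s → c v < G.degree v) (hsame : ∀ v, sameRankDegree G r v = 0) :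
    IsCompatibleRank G s r where
  eq_zero_iff _ := hr.eq_zero_iff
  ne_of_adj u v h := (sameRankDegree_eq_zero_iff.1 (hsame u) v h).symm
  exists_adj_succ_eq _ := hr.exists_adj_succ_eq hs hstable

lemma isCompatibleLayering (hr : IsCanonRank G s c r) (hcr : IsCompatibleRank G s r) :
    IsCompatibleLayering G s (canonTopPart G s c) (univ.sup r) where
  zero_eq := rfl
  nonempty j hj := by
    obtain ⟨v, -, hv⟩ := exists_mem_eq_sup univ ⟨s, mem_univ s⟩ r
    obtain ⟨u, hu⟩ := hcr.exists_eq_of_le (hv ▸ hj)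
    exact ⟨u, hr.mem_canonTopPart_iff.2 hu⟩
  eq_empty j hj := eq_empty_of_forall_notMem fun v hv =>
    (le_sup (mem_univ v)).not_gt (hr.mem_canonTopPart_iff.1 hv ▸ hj)
  disjoint := (pairwise_disjoint_on _).1 (canonTopPart_pairwise_disjoint G s c)
  biUnion_eq := by
    rw [← canonTopCum_eq_biUnion]
    exact eq_univ_of_forall fun v => (hr v _).2 (le_sup (mem_univ v))
  not_adj j _ a ha b hb hadj :=
    hcr.ne_of_adj a b hadj (by rw [hr.mem_canonTopPart_iff.1 ha, hr.mem_canonTopPart_iff.1 hb])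
  exists_adj j hj _ a ha := by
    have ha := hr.mem_canonTopPart_iff.1 ha
    obtain ⟨b, hadj, hb⟩ := hcr.exists_adj_succ_eq a fun h => by
      rw [(hcr.eq_zero_iff a).2 h] at ha; omega
    exact ⟨b, hr.mem_canonTopPart_iff.2 (by omega), hadj⟩

end IsCanonRank

namespace IsCompatibleLayering

variable {s : Fin n} {P : ℕ → Finset (Fin n)} {k : ℕ}

lemma mem_iff_partRank_eq (hP : IsCompatibleLayering G s P k) {v : Fin n} {j : ℕ} :
    v ∈ P j ↔ partRank P v = j := by
  refine _root_.mem_iff_partRank_eq ((pairwise_disjoint_on P).2 hP.disjoint) ?_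
  have hv := hP.biUnion_eq ▸ mem_univ v
  exact (mem_biUnion.1 hv).imp fun _ h => h.2

lemma partRank_le (hP : IsCompatibleLayering G s P k) (v : Fin n) : partRank P v ≤ k := by
  by_contra! h
  simpa [hP.eq_empty _ h] using hP.mem_iff_partRank_eq.2 (rfl : partRank P v = _)

lemma partRank_eq_zero_iff (hP : IsCompatibleLayering G s P k) {v : Fin n} :
    partRank P v = 0 ↔ v = s := by
  rw [← hP.mem_iff_partRank_eq, hP.zero_eq, mem_singleton]

lemma isCompatibleRank (hP : IsCompatibleLayering G s P k) :
    IsCompatibleRank G s (partRank P) where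
  eq_zero_iff _ := hP.partRank_eq_zero_iff
  ne_of_adj u v h huv := hP.not_adj _ (hP.partRank_le u) u (hP.mem_iff_partRank_eq.2 rfl) v
    (hP.mem_iff_partRank_eq.2 huv.symm) h
  exists_adj_succ_eq v hv := by
    have hpos : partRank P v ≠ 0 := hP.partRank_eq_zero_iff.not.2 hv
    obtain ⟨b, hb, hadj⟩ := hP.exists_adj _ (by omega) (hP.partRank_le v) v
      (hP.mem_iff_partRank_eq.2 rfl)
    exact ⟨b, hadj, by rw [hP.mem_iff_partRank_eq.1 hb]; omega⟩

lemma canonTopPart_rankConf (hP : IsCompatibleLayering G s P k) :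
    canonTopPart G s (rankConf G (partRank P)) = P := by
  funext j
  ext v
  rw [hP.isCompatibleRank.isCanonRank.mem_canonTopPart_iff, hP.mem_iff_partRank_eq]

end IsCompatibleLayering

section MinimalRecurrent

variable {s : Fin n} {c : Fin n → ℕ}

lemma isCompatibleRank_partRank_canonTopPart (hrec : IsRecurrent G s c) (hlev : level G c = 0) :
    IsCompatibleRank G s (partRank (canonTopPart G s c)) := by
  have hr := isCanonRank_partRank_canonTopPart hrec
  have hsame := ((sum_eq_card_edgeFinset_iff (hr.degree_le_add_lowerDegree hrec.1)).1
    (level_eq_zero_iff.1 hlev)).1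
  exact hr.isCompatibleRank hrec.1 hrec.2.1 hsame

lemma rankConf_partRank_canonTopPart (hrec : IsRecurrent G s c) (hlev : level G c = 0) :
    rankConf G (partRank (canonTopPart G s c)) = c := by
  have hr := isCanonRank_partRank_canonTopPart hrec
  have htight := ((sum_eq_card_edgeFinset_iff (hr.degree_le_add_lowerDegree hrec.1)).1
    (level_eq_zero_iff.1 hlev)).2
  funext v
  rw [rankConf, ← htight v, Nat.add_sub_cancel]

end MinimalRecurrent

end

/-- the map `c ↦ CanonTop(c)` is a bijection from the minimal recurrent
configurations of the ASM on `G_π` with sink `s` onto the `(π, s)`-compatible ordered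
partitions of `[n]`. -/
theorem canonTop_bijOn_minRec {n : ℕ} (π : Equiv.Perm (Fin n)) (s : Fin n) :
    Set.BijOn (fun c : Fin n → ℕ => canonTopPart (permGraph π) s c)
      {c | IsRecurrent (permGraph π) s c ∧ level (permGraph π) c = 0}
      {P | ∃ k : ℕ, IsCompatiblePartition π s P k} := by
  refine Set.InvOn.bijOn (f' := fun P => rankConf (permGraph π) (partRank P)) ⟨?_, ?_⟩ ?_ ?_
  · rintro c ⟨hrec, hlev⟩
    exact rankConf_partRank_canonTopPart hrec hlev
  · rintro P ⟨k, hP⟩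
    exact (isCompatiblePartition_iff.1 hP).canonTopPart_rankConf
  · rintro c ⟨hrec, hlev⟩
    have hr := isCanonRank_partRank_canonTopPart hrec
    exact ⟨_, isCompatiblePartition_iff.2
      (hr.isCompatibleLayering (isCompatibleRank_partRank_canonTopPart hrec hlev))⟩
  · rintro P ⟨k, hP⟩
    have hr := (isCompatiblePartition_iff.1 hP).isCompatibleRank
    exact ⟨hr.isRecurrent_rankConf, hr.level_rankConf⟩
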